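/- For every parameter vector θ, every layer ℓ = 1,…,L, every original unit index j = 1,…,H_ℓ, and every input x ∈ ℝ^n, the pre-activations of the original units are unchanged under both the β and the γ embeddings: â_j^ℓ(x, β_{ζs}(θ)) = â_j^ℓ(x, γ_λ(θ)) = a_j^ℓ(x, θ). -/

import Mathlib

/-- Parameters of a fully connected feedforward network: `w ℓ j i` is the weight from
unit `i` of layer `ℓ-1` to unit `j` of layer `ℓ`, and `b ℓ j` is the bias of unit `j`
of layer `ℓ`.  Layers are numbered `1, …, L` (layer `0` is the input); units within a
layer are numbered from `0`, so layer `ℓ` consists of the units `0, …, H ℓ - 1`. -/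
structure NNParams where
  w : ℕ → ℕ → ℕ → ℝ
  b : ℕ → ℕ → ℝ

/-- `layerOut g H θ x ℓ i` : the output of unit `i` of layer `ℓ` on input `x`
(`layerOut g H θ x 0 = x`, and for `ℓ ≥ 1` it is `g` applied to the pre-activation). -/
noncomputable def layerOut (g : ℝ → ℝ) (H : ℕ → ℕ) (θ : NNParams) (x : ℕ → ℝ) :
    ℕ → ℕ → ℝ
  | 0, i => x i
  | ℓ + 1, i =>
      g (∑ j ∈ Finset.range (H ℓ), θ.w (ℓ + 1) i j * layerOut g H θ x ℓ j + θ.b (ℓ + 1) i)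

/-- Pre-activation `a_j^ℓ(x, θ)` of unit `j` of layer `ℓ ≥ 1`:
`a_j^ℓ = ∑_{i < H (ℓ-1)} w_{ji}^ℓ · (output of unit i of layer ℓ-1) + σ_j^ℓ`.
The outputs of the last layer `L` are `f_r(x,θ) = preact g H θ x L r` (linear output units). -/
noncomputable def preact (g : ℝ → ℝ) (H : ℕ → ℕ) (θ : NNParams) (x : ℕ → ℝ)
    (ℓ j : ℕ) : ℝ :=
  ∑ i ∈ Finset.range (H (ℓ - 1)), θ.w ℓ j i * layerOut g H θ x (ℓ - 1) i + θ.b ℓ j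

/-- Empirical risk `R_emp(θ) = (1/P) ∑_{p<P} ℒ(y^p, f(x^p, θ))`, where the network has
`L` layers with layer sizes given by `H`, the training inputs are `X p` and the labels
`Y p`, and `m` is the output dimension seen by the loss. -/
noncomputable def Remp (g : ℝ → ℝ) (H : ℕ → ℕ) (L P : ℕ) {m : ℕ}
    (X Y : ℕ → ℕ → ℝ) (loss : (ℕ → ℝ) → (Fin m → ℝ) → ℝ) (θ : NNParams) : ℝ :=
  (1 / (P : ℝ)) * ∑ p ∈ Finset.range P,
    loss (Y p) (fun r => preact g H θ (X p) L r)

/-- Layer sizes of the network enlarged by adding `K` new neurons to layer `l`. -/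
def enlargeH (H : ℕ → ℕ) (l K : ℕ) : ℕ → ℕ :=
  fun ℓ => if ℓ = l then H l + K else H ℓ

/-- The embedding `α_{ζv}` : copy all parameters, give the `k`-th new neuron of layer `l`
(`k = 0, …, K-1`, i.e. unit `H l + k`) the bias `ζ k` and incoming weights `v k`, and
set all weights from the new neurons to layer `l+1` to zero. -/
noncomputable def alphaEmb (H : ℕ → ℕ) (l K : ℕ) (ζ : ℕ → ℝ) (v : ℕ → ℕ → ℝ)
    (θ : NNParams) : NNParams where
  w := fun ℓ j i =>
    if ℓ = l ∧ H l ≤ j then v (j - H l) i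
    else if ℓ = l + 1 ∧ H l ≤ i then 0
    else θ.w ℓ j i
  b := fun ℓ j => if ℓ = l ∧ H l ≤ j then ζ (j - H l) else θ.b ℓ j

/-- The embedding `β_{ζs}` : copy all parameters except the biases of layer `l+1`, give
the `k`-th new neuron of layer `l` the bias `ζ k` and zero incoming weights, set the
outgoing weight from the `k`-th new neuron to unit `j` of layer `l+1` to `s j k`, and
replace the bias of unit `j` of layer `l+1` by `σ_j - ∑_{k<K} s j k · g (ζ k)`. -/
noncomputable def betaEmb (g : ℝ → ℝ) (H : ℕ → ℕ) (l K : ℕ) (ζ : ℕ → ℝ)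
    (s : ℕ → ℕ → ℝ) (θ : NNParams) : NNParams where
  w := fun ℓ j i =>
    if ℓ = l ∧ H l ≤ j then 0
    else if ℓ = l + 1 ∧ H l ≤ i then s j (i - H l)
    else θ.w ℓ j i
  b := fun ℓ j =>
    if ℓ = l ∧ H l ≤ j then ζ (j - H l)
    else if ℓ = l + 1 then θ.b (l + 1) j - ∑ k ∈ Finset.range K, s j k * g (ζ k)
    else θ.b ℓ j

/-- The embedding `γ_λ` : duplicate unit `h` of layer `l` into each of the `K` new
neurons (same bias and incoming weights as unit `h`), and split the outgoing weights:
unit `h` keeps `lam 0 · w_{jh}^{l+1}` and the `k`-th new neuron (`k = 0, …, K-1`,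
i.e. unit `H l + k`, corresponding to `λ_{k+1}` of the paper) gets
`lam (k+1) · w_{jh}^{l+1}`; all other parameters are copied. -/
noncomputable def gammaEmb (H : ℕ → ℕ) (l K : ℕ) (h : ℕ) (lam : ℕ → ℝ)
    (θ : NNParams) : NNParams where
  w := fun ℓ j i =>
    if ℓ = l ∧ H l ≤ j then θ.w l h i
    else if ℓ = l + 1 ∧ i = h then lam 0 * θ.w (l + 1) j h
    else if ℓ = l + 1 ∧ H l ≤ i then lam (i - H l + 1) * θ.w (l + 1) j h
    else θ.w ℓ j i
  b := fun ℓ j => if ℓ = l ∧ H l ≤ j then θ.b l h else θ.b ℓ j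

/-- `θ` with the single weight `w ℓ j i` replaced by `t`. -/
noncomputable def updW (θ : NNParams) (ℓ j i : ℕ) (t : ℝ) : NNParams :=
  ⟨fun ℓ' j' i' => if ℓ' = ℓ ∧ j' = j ∧ i' = i then t else θ.w ℓ' j' i', θ.b⟩

/-- `θ` with the single bias `b ℓ j` replaced by `t`. -/
noncomputable def updB (θ : NNParams) (ℓ j : ℕ) (t : ℝ) : NNParams :=
  ⟨θ.w, fun ℓ' j' => if ℓ' = ℓ ∧ j' = j then t else θ.b ℓ' j'⟩

/-- `∇ R_emp(θ) = 0` : every partial derivative of the empirical risk with respect to an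
actual network parameter (a weight `w ℓ j i` or a bias `b ℓ j`, `1 ≤ ℓ ≤ L`, `j < H ℓ`,
`i < H (ℓ-1)`) vanishes at `θ`. -/
def IsCritical (g : ℝ → ℝ) (H : ℕ → ℕ) (L P : ℕ) {m : ℕ}
    (X Y : ℕ → ℕ → ℝ) (loss : (ℕ → ℝ) → (Fin m → ℝ) → ℝ) (θ : NNParams) : Prop :=
  (∀ ℓ j i, 1 ≤ ℓ → ℓ ≤ L → j < H ℓ → i < H (ℓ - 1) →
      deriv (fun t => Remp g H L P X Y loss (updW θ ℓ j i t)) (θ.w ℓ j i) = 0) ∧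
  ∀ ℓ j, 1 ≤ ℓ → ℓ ≤ L → j < H ℓ →
      deriv (fun t => Remp g H L P X Y loss (updB θ ℓ j t)) (θ.b ℓ j) = 0

/-- Layer sizes after enlarging layer `p.1` by `p.2` neurons for each pair in the list. -/
def multiEnlargeH : (ℕ → ℕ) → List (ℕ × ℕ) → (ℕ → ℕ)
  | H, [] => H
  | H, (l, K) :: rest => multiEnlargeH (enlargeH H l K) rest

/-- Composition of `α` embeddings: for each `(l, K)` in the list (in order), add `K` new
neurons to layer `l` via `α` with biases `ζ l` and incoming weights `v l`. -/
noncomputable def multiAlpha (ζ : ℕ → ℕ → ℝ) (v : ℕ → ℕ → ℕ → ℝ) :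
    (ℕ → ℕ) → List (ℕ × ℕ) → NNParams → NNParams
  | _, [], θ => θ
  | H, (l, K) :: rest, θ =>
      multiAlpha ζ v (enlargeH H l K) rest (alphaEmb H l K (ζ l) (v l) θ)

noncomputable def multiBeta (g : ℝ → ℝ) (ζ : ℕ → ℕ → ℝ) (s : ℕ → ℕ → ℕ → ℝ) :
    (ℕ → ℕ) → List (ℕ × ℕ) → NNParams → NNParams
  | _, [], θ => θ
  | H, (l, K) :: rest, θ =>
      multiBeta g ζ s (enlargeH H l K) rest (betaEmb g H l K (ζ l) (s l) θ)

noncomputable def multiGamma (hsel : ℕ → ℕ) (lam : ℕ → ℕ → ℝ) :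
    (ℕ → ℕ) → List (ℕ × ℕ) → NNParams → NNParams
  | _, [], θ => θ
  | H, (l, K) :: rest, θ =>
      multiGamma hsel lam (enlargeH H l K) rest (gammaEmb H l K (hsel l) (lam l) θ)

/-- A single enlargement step: either a `β` embedding with zero outgoing weights, or a
`γ` embedding. -/
inductive EmbStep where
  | beta (l K : ℕ) (ζ : ℕ → ℝ)
  | gamma (l K : ℕ) (h : ℕ) (lam : ℕ → ℝ)

def EmbStep.layer : EmbStep → ℕ
  | .beta l _ _ => l
  | .gamma l _ _ _ => l

def EmbStep.count : EmbStep → ℕ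
  | .beta _ K _ => K
  | .gamma _ K _ _ => K

noncomputable def EmbStep.apply (g : ℝ → ℝ) (H : ℕ → ℕ) (θ : NNParams) : EmbStep → NNParams
  | .beta l K ζ => betaEmb g H l K ζ (fun _ _ => 0) θ
  | .gamma l K h lam => gammaEmb H l K h lam θ

def EmbStep.OK (H : ℕ → ℕ) (L : ℕ) : EmbStep → Prop
  | .beta l _ _ => 1 ≤ l ∧ l + 1 ≤ L
  | .gamma l K h lam => 1 ≤ l ∧ l + 1 ≤ L ∧ h < H l ∧ ∑ i ∈ Finset.range (K + 1), lam i = 1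

noncomputable def applySteps (g : ℝ → ℝ) : (ℕ → ℕ) → List EmbStep → NNParams → NNParams
  | _, [], θ => θ
  | H, st :: rest, θ =>
      applySteps g (enlargeH H st.layer st.count) rest (EmbStep.apply g H θ st)

def stepsH : (ℕ → ℕ) → List EmbStep → (ℕ → ℕ)
  | H, [] => H
  | H, st :: rest => stepsH (enlargeH H st.layer st.count) rest

/-!
By induction on the layer, the enlarged network computes the original outputs on the original
units, while under `β` the new units output the constants `g (ζ k)` and under `γ` they copy
unit `h`. So the only pre-activations that could change are those of layer `l + 1`: under `β`
they gain `∑ k, s j k * g (ζ k)`, which the shifted bias cancels, and under `γ` the contribution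
of unit `h` is rescaled by `λ₀ + λ₁ + ⋯ + λ_K = 1`.
-/

open Finset

section

variable (g : ℝ → ℝ) (H : ℕ → ℕ) (θ : NNParams) (x : ℕ → ℝ)

lemma enlargeH_self (l K : ℕ) : enlargeH H l K l = H l + K := if_pos rfl

lemma enlargeH_of_ne {ℓ l : ℕ} (K : ℕ) (hℓ : ℓ ≠ l) : enlargeH H l K ℓ = H ℓ := if_neg hℓ

lemma preact_succ (ℓ j : ℕ) :
    preact g H θ x (ℓ + 1) j =
      ∑ i ∈ range (H ℓ), θ.w (ℓ + 1) j i * layerOut g H θ x ℓ i + θ.b (ℓ + 1) j := rfl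

lemma layerOut_succ (ℓ i : ℕ) :
    layerOut g H θ x (ℓ + 1) i = g (preact g H θ x (ℓ + 1) i) := rfl

end

lemma sum_split_weight_of_sum_eq_one {f : ℕ → ℝ} {n h K : ℕ} (hh : h < n) {lam : ℕ → ℝ}
    (hlam : ∑ i ∈ range (K + 1), lam i = 1) :
    ∑ i ∈ range n, (if i = h then lam 0 * f i else f i) + ∑ k ∈ range K, lam (k + 1) * f h =
      ∑ i ∈ range n, f i := by
  have hrest : ∑ k ∈ range K, lam (k + 1) = 1 - lam 0 := by
    rw [sum_range_succ'] at hlam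
    linarith
  have hsplit : ∀ i ∈ range n,
      (if i = h then lam 0 * f i else f i) = f i + if i = h then (lam 0 - 1) * f h else 0 := by
    intro i _
    split_ifs with hi
    · rw [hi]; ring
    · ring
  rw [sum_congr rfl hsplit, sum_add_distrib, sum_ite_eq', if_pos (mem_range.2 hh), ← sum_mul,
    hrest]
  ring

section Beta

variable (g : ℝ → ℝ) (H : ℕ → ℕ) {l K : ℕ} (ζ : ℕ → ℝ) (s : ℕ → ℕ → ℝ) (θ : NNParams)
  (x : ℕ → ℝ)

lemma preact_betaEmb_succ {ℓ j : ℕ}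
    (hout : ∀ i, layerOut g (enlargeH H l K) (betaEmb g H l K ζ s θ) x ℓ i =
      if ℓ = l ∧ H l ≤ i then g (ζ (i - H l)) else layerOut g H θ x ℓ i)
    (hj : ¬(ℓ + 1 = l ∧ H l ≤ j)) :
    preact g (enlargeH H l K) (betaEmb g H l K ζ s θ) x (ℓ + 1) j =
      preact g H θ x (ℓ + 1) j := by
  rw [preact_succ, preact_succ]
  rcases eq_or_ne ℓ l with rfl | hℓ
  · have hold : ∀ i ∈ range (H ℓ),
        (betaEmb g H ℓ K ζ s θ).w (ℓ + 1) j i *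
          layerOut g (enlargeH H ℓ K) (betaEmb g H ℓ K ζ s θ) x ℓ i =
        θ.w (ℓ + 1) j i * layerOut g H θ x ℓ i := by
      intro i hi
      have : ¬ H ℓ ≤ i := by simpa using hi
      rw [hout, if_neg (by tauto)]
      simp [betaEmb, this]
    have hnew : ∀ k ∈ range K,
        (betaEmb g H ℓ K ζ s θ).w (ℓ + 1) j (H ℓ + k) *
          layerOut g (enlargeH H ℓ K) (betaEmb g H ℓ K ζ s θ) x ℓ (H ℓ + k) =
        s j k * g (ζ k) := by
      intro k _
      rw [hout, if_pos (by simp)]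
      simp [betaEmb]
    rw [enlargeH_self, sum_range_add, sum_congr rfl hold, sum_congr rfl hnew]
    simp only [betaEmb, if_neg hj, if_true]
    ring
  · have hsame : ∀ i ∈ range (H ℓ),
        (betaEmb g H l K ζ s θ).w (ℓ + 1) j i *
          layerOut g (enlargeH H l K) (betaEmb g H l K ζ s θ) x ℓ i =
        θ.w (ℓ + 1) j i * layerOut g H θ x ℓ i := by
      intro i _
      rw [hout, if_neg (by tauto)]
      simp [betaEmb, hj, hℓ]
    rw [enlargeH_of_ne H K hℓ, sum_congr rfl hsame]
    simp [betaEmb, hj, hℓ]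

lemma layerOut_betaEmb (hl : 1 ≤ l) (ℓ i : ℕ) :
    layerOut g (enlargeH H l K) (betaEmb g H l K ζ s θ) x ℓ i =
      if ℓ = l ∧ H l ≤ i then g (ζ (i - H l)) else layerOut g H θ x ℓ i := by
  induction ℓ generalizing i with
  | zero => rw [if_neg (by omega)]; rfl
  | succ ℓ ih =>
    rw [layerOut_succ, layerOut_succ]
    by_cases hi : ℓ + 1 = l ∧ H l ≤ i
    · have hzero : ∀ k ∈ range (enlargeH H l K ℓ),
          (betaEmb g H l K ζ s θ).w (ℓ + 1) i k *
            layerOut g (enlargeH H l K) (betaEmb g H l K ζ s θ) x ℓ k = 0 := by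
        intro k _
        simp [betaEmb, hi]
      rw [if_pos hi, preact_succ, sum_congr rfl hzero]
      simp [betaEmb, hi]
    · rw [if_neg hi, preact_betaEmb_succ g H ζ s θ x ih hi]

end Beta

section Gamma

variable (g : ℝ → ℝ) (H : ℕ → ℕ) {l K h : ℕ} {lam : ℕ → ℝ} (θ : NNParams) (x : ℕ → ℝ)

lemma preact_gammaEmb_succ (hh : h < H l) (hlam : ∑ i ∈ range (K + 1), lam i = 1) {ℓ j : ℕ}
    (hout : ∀ i, layerOut g (enlargeH H l K) (gammaEmb H l K h lam θ) x ℓ i =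
      if ℓ = l ∧ H l ≤ i then layerOut g H θ x l h else layerOut g H θ x ℓ i)
    (hj : ¬(ℓ + 1 = l ∧ H l ≤ j)) :
    preact g (enlargeH H l K) (gammaEmb H l K h lam θ) x (ℓ + 1) j =
      preact g H θ x (ℓ + 1) j := by
  rw [preact_succ, preact_succ]
  rcases eq_or_ne ℓ l with rfl | hℓ
  · have hold : ∀ i ∈ range (H ℓ),
        (gammaEmb H ℓ K h lam θ).w (ℓ + 1) j i *
          layerOut g (enlargeH H ℓ K) (gammaEmb H ℓ K h lam θ) x ℓ i =
        if i = h then lam 0 * (θ.w (ℓ + 1) j i * layerOut g H θ x ℓ i)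
        else θ.w (ℓ + 1) j i * layerOut g H θ x ℓ i := by
      intro i hi
      have : ¬ H ℓ ≤ i := by simpa using hi
      rw [hout, if_neg (by tauto)]
      split_ifs with hih
      · simp [gammaEmb, hih, mul_assoc]
      · simp [gammaEmb, hih, this]
    have hnew : ∀ k ∈ range K,
        (gammaEmb H ℓ K h lam θ).w (ℓ + 1) j (H ℓ + k) *
          layerOut g (enlargeH H ℓ K) (gammaEmb H ℓ K h lam θ) x ℓ (H ℓ + k) =
        lam (k + 1) * (θ.w (ℓ + 1) j h * layerOut g H θ x ℓ h) := by
      intro k _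
      rw [hout, if_pos (by simp)]
      simp [gammaEmb, mul_assoc, show H ℓ + k ≠ h by omega]
    rw [enlargeH_self, sum_range_add, sum_congr rfl hold, sum_congr rfl hnew,
      sum_split_weight_of_sum_eq_one hh hlam]
    simp [gammaEmb]
  · have hsame : ∀ i ∈ range (H ℓ),
        (gammaEmb H l K h lam θ).w (ℓ + 1) j i *
          layerOut g (enlargeH H l K) (gammaEmb H l K h lam θ) x ℓ i =
        θ.w (ℓ + 1) j i * layerOut g H θ x ℓ i := by
      intro i _
      rw [hout, if_neg (by tauto)]
      simp [gammaEmb, hj, hℓ]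
    rw [enlargeH_of_ne H K hℓ, sum_congr rfl hsame]
    simp [gammaEmb, hj]

lemma layerOut_gammaEmb (hl : 1 ≤ l) (hh : h < H l) (hlam : ∑ i ∈ range (K + 1), lam i = 1)
    (ℓ i : ℕ) :
    layerOut g (enlargeH H l K) (gammaEmb H l K h lam θ) x ℓ i =
      if ℓ = l ∧ H l ≤ i then layerOut g H θ x l h else layerOut g H θ x ℓ i := by
  induction ℓ generalizing i with
  | zero => rw [if_neg (by omega)]; rfl
  | succ ℓ ih =>
    by_cases hi : ℓ + 1 = l ∧ H l ≤ i
    · obtain ⟨rfl, hi⟩ := hi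
      have hcopy : ∀ k ∈ range (H ℓ),
          (gammaEmb H (ℓ + 1) K h lam θ).w (ℓ + 1) i k *
            layerOut g (enlargeH H (ℓ + 1) K) (gammaEmb H (ℓ + 1) K h lam θ) x ℓ k =
          θ.w (ℓ + 1) h k * layerOut g H θ x ℓ k := by
        intro k _
        rw [ih, if_neg (by omega)]
        simp [gammaEmb, hi]
      rw [if_pos ⟨rfl, hi⟩, layerOut_succ, layerOut_succ, preact_succ, preact_succ,
        enlargeH_of_ne H K (by omega), sum_congr rfl hcopy]
      simp [gammaEmb, hi]
    · rw [if_neg hi, layerOut_succ, layerOut_succ,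
        preact_gammaEmb_succ g H θ x hh hlam ih hi]

end Gamma

theorem beta_gamma_preserve_preact_general
    (g : ℝ → ℝ) (H : ℕ → ℕ) (L : ℕ)
    (l : ℕ) (hl1 : 1 ≤ l) (K : ℕ)
    (ζ : ℕ → ℝ) (s : ℕ → ℕ → ℝ)
    (h : ℕ) (hh : h < H l) (lam : ℕ → ℝ)
    (hlam : ∑ i ∈ Finset.range (K + 1), lam i = 1)
    (θ : NNParams) (x : ℕ → ℝ) :
    ∀ ℓ j, 1 ≤ ℓ → ℓ ≤ L → j < H ℓ →
      preact g (enlargeH H l K) (betaEmb g H l K ζ s θ) x ℓ j = preact g H θ x ℓ j ∧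
      preact g (enlargeH H l K) (gammaEmb H l K h lam θ) x ℓ j = preact g H θ x ℓ j := by
  intro ℓ j hℓ _ hj
  obtain ⟨ℓ, rfl⟩ : ∃ n, ℓ = n + 1 := ⟨ℓ - 1, by omega⟩
  have horig : ¬(ℓ + 1 = l ∧ H l ≤ j) := fun ⟨hℓl, hle⟩ => by subst hℓl; omega
  exact ⟨preact_betaEmb_succ g H ζ s θ x (layerOut_betaEmb g H ζ s θ x hl1 ℓ) horig,
    preact_gammaEmb_succ g H θ x hh hlam (layerOut_gammaEmb g H θ x hl1 hh hlam ℓ) horig⟩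

/-- For every parameter vector `θ`, every layer `ℓ = 1, …, L`, every
original unit `j < H ℓ` and every input `x`, the pre-activations of the original units
are unchanged under both the `β` and the `γ` embeddings:
`â_j^ℓ(x, β_{ζs}(θ)) = â_j^ℓ(x, γ_λ(θ)) = a_j^ℓ(x, θ)`. -/
theorem beta_gamma_preserve_preact
    (g : ℝ → ℝ) (H : ℕ → ℕ) (L : ℕ)
    (l : ℕ) (hl1 : 1 ≤ l) (hlL : l + 1 ≤ L) (K : ℕ)
    (ζ : ℕ → ℝ) (s : ℕ → ℕ → ℝ)
    (h : ℕ) (hh : h < H l) (lam : ℕ → ℝ)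
    (hlam : ∑ i ∈ Finset.range (K + 1), lam i = 1)
    (θ : NNParams) (x : ℕ → ℝ) :
    ∀ ℓ j, 1 ≤ ℓ → ℓ ≤ L → j < H ℓ →
      preact g (enlargeH H l K) (betaEmb g H l K ζ s θ) x ℓ j = preact g H θ x ℓ j ∧
      preact g (enlargeH H l K) (gammaEmb H l K h lam θ) x ℓ j = preact g H θ x ℓ j :=
  beta_gamma_preserve_preact_general g H L l hl1 K ζ s h hh lam hlam θ x
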